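/- arXiv:1209.1123 — 2 statements merged into one kernel-verified Lean document; each statement's English description precedes it below -/
import Mathlib

section
/- (Youla's parametrization, Theorem 1.) Let (M, N, M̃, Ñ, X, Y, X̃, Ỹ) be a DCF of the strictly proper plant G ∈ F^{m×p} over Ω. Then: (i) for every stable Q ∈ 𝔸^{p×m}, the matrices Y_Q = Y − QÑ and Ỹ_Q = Ỹ − NQ are invertible over F, Y_Q⁻¹·X_Q = X̃_Q·Ỹ_Q⁻¹, and the controller K_Q = Y_Q⁻¹·X_Q stabilizes G; (ii) conversely, every controller K ∈ F^{p×m} that stabilizes G can be written as K = K_Q for some stable Q ∈ 𝔸^{p×m}. -/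
open Matrix

noncomputable section

/-- The field of real rational functions. -/
abbrev F : Type := RatFunc ℝ

/-- A rational function is stable (w.r.t. stability region `Ω`) if it is proper and
every complex root of the complexification of its reduced denominator lies in `Ω`. -/
def StableF (Ω : Set ℂ) (f : F) : Prop :=
  f.intDegree ≤ 0 ∧ ∀ z : ℂ, (f.denom.map (algebraMap ℝ ℂ)).IsRoot z → z ∈ Ω

/-- A matrix over `F` is stable if all its entries are stable. -/
def MatStable (Ω : Set ℂ) {a b : Type} (M : Matrix a b F) : Prop :=
  ∀ i j, StableF Ω (M i j)

/-- A matrix over `F` is strictly proper if every entry is `0` or has negative `intDegree`. -/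
def StrictlyProper {a b : Type} (G : Matrix a b F) : Prop :=
  ∀ i j, G i j = 0 ∨ (G i j).intDegree < 0

/-- A matrix over `F` is proper if every entry has nonpositive `intDegree`. -/
def ProperM {a b : Type} (K : Matrix a b F) : Prop :=
  ∀ i j, (K i j).intDegree ≤ 0

/-- `K` stabilizes `G` if `I + G*K` is invertible and the four closed-loop
transfer matrices are stable. -/
def Stabilizes (Ω : Set ℂ) {m p : ℕ} (G : Matrix (Fin m) (Fin p) F)
    (K : Matrix (Fin p) (Fin m) F) : Prop :=
  IsUnit (1 + G * K).det ∧
    MatStable Ω (1 + G * K)⁻¹ ∧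
    MatStable Ω ((1 + G * K)⁻¹ * G) ∧
    MatStable Ω (K * (1 + G * K)⁻¹) ∧
    MatStable Ω (1 + K * G)⁻¹

/-- A doubly coprime factorization of `G` over `Ω`. -/
structure IsDCF (Ω : Set ℂ) {m p : ℕ} (G : Matrix (Fin m) (Fin p) F)
    (M : Matrix (Fin p) (Fin p) F) (N : Matrix (Fin m) (Fin p) F)
    (Mt : Matrix (Fin m) (Fin m) F) (Nt : Matrix (Fin m) (Fin p) F)
    (X : Matrix (Fin p) (Fin m) F) (Y : Matrix (Fin p) (Fin p) F)
    (Xt : Matrix (Fin p) (Fin m) F) (Yt : Matrix (Fin m) (Fin m) F) : Prop where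
  stM : MatStable Ω M
  stN : MatStable Ω N
  stMt : MatStable Ω Mt
  stNt : MatStable Ω Nt
  stX : MatStable Ω X
  stY : MatStable Ω Y
  stXt : MatStable Ω Xt
  stYt : MatStable Ω Yt
  hM : IsUnit M.det
  hMt : IsUnit Mt.det
  hLeft : G = Mt⁻¹ * Nt
  hRight : G = N * M⁻¹
  bezout : Matrix.fromBlocks Y X (-Nt) Mt * Matrix.fromBlocks M (-Xt) N Yt = 1

/-- A left coprime factorization of `G` over `Ω`. -/
def IsLCF (Ω : Set ℂ) {m p : ℕ} (G : Matrix (Fin m) (Fin p) F)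
    (Mt : Matrix (Fin m) (Fin m) F) (Nt : Matrix (Fin m) (Fin p) F) : Prop :=
  MatStable Ω Mt ∧ MatStable Ω Nt ∧ IsUnit Mt.det ∧ G = Mt⁻¹ * Nt ∧
    ∃ Xt : Matrix (Fin p) (Fin m) F, ∃ Yt : Matrix (Fin m) (Fin m) F,
      MatStable Ω Xt ∧ MatStable Ω Yt ∧ Nt * Xt + Mt * Yt = 1

/-- A right coprime factorization of `G` over `Ω`. -/
def IsRCF (Ω : Set ℂ) {m p : ℕ} (G : Matrix (Fin m) (Fin p) F)
    (N : Matrix (Fin m) (Fin p) F) (M : Matrix (Fin p) (Fin p) F) : Prop :=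
  MatStable Ω N ∧ MatStable Ω M ∧ IsUnit M.det ∧ G = N * M⁻¹ ∧
    ∃ X : Matrix (Fin p) (Fin m) F, ∃ Y : Matrix (Fin p) (Fin p) F,
      MatStable Ω X ∧ MatStable Ω Y ∧ Y * M + X * N = 1

/-- Evaluation of a rational function at a complex point (complexified num/denom). -/
def evalC (z : ℂ) (f : F) : ℂ :=
  (f.num.map (algebraMap ℝ ℂ)).eval z / (f.denom.map (algebraMap ℝ ℂ)).eval z

/-!
Properness and strict properness are the conditions `v f ≤ 1` and `v f < 1` for the valuation
`v` at infinity. If `S` is strictly proper, then `det (1 + S) ≡ 1` modulo the ideal `{v < 1}` of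
the valuation ring, so `det (1 + S) ≠ 0`. For a DCF, `Y M = 1 - X (G M)` and
`M̃ Ỹ = 1 - (M̃ G) X̃` with `G` strictly proper, so `Y` and `Ỹ` are invertible.

Multiplying the two Bézout matrices by `[[1, Q], [0, 1]]` on the left and by its inverse on the
right shows that `(M, N, M̃, Ñ, X_Q, Y_Q, X̃_Q, Ỹ_Q)` is again a DCF. So (i) reduces to `Q = 0`,
where the four closed-loop maps are `Ỹ M̃`, `Ỹ Ñ`, `X̃ M̃` and `M Y`. Conversely, for a
stabilizing `K` the parameter is `Q = (Y K - X)(M̃ + Ñ K)⁻¹ = (Y K - X)(1 + G K)⁻¹(Ỹ + G X̃)`.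
It is stable because it is built from the closed-loop maps (`K (1 + G K)⁻¹ G = 1 - (1 + K G)⁻¹`),
and it satisfies `Y_Q K = X_Q`.
-/

theorem Matrix.det_one_add_sub_one_mem {R n : Type*} [CommRing R] [Fintype n] [DecidableEq n]
    {I : Ideal R} {S : Matrix n n R} (hS : ∀ i j, S i j ∈ I) : (1 + S).det - 1 ∈ I := by
  have hS0 : (Ideal.Quotient.mk I).mapMatrix S = 0 := by
    ext i j
    exact Ideal.Quotient.eq_zero_iff_mem.mpr (hS i j)
  rw [← Ideal.Quotient.eq_zero_iff_mem, map_sub, map_one, RingHom.map_det, map_add, map_one, hS0,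
    add_zero, det_one, sub_self]

theorem Valuation.det_one_add_ne_zero {K Γ₀ n : Type*} [Field K]
    [LinearOrderedCommGroupWithZero Γ₀] [Fintype n] [DecidableEq n] (v : Valuation K Γ₀)
    {S : Matrix n n K} (hS : ∀ i j, v (S i j) < 1) : (1 + S).det ≠ 0 := by
  let S' : Matrix n n v.integer := fun i j => ⟨S i j, (hS i j).le⟩
  have hlift : (1 + S).det = ((1 + S').det : K) := by
    rw [← v.integer.coe_subtype, RingHom.map_det, map_add, map_one]
    rfl
  have hmem : v ((1 + S).det - 1) < 1 := by
    rw [hlift]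
    exact Matrix.det_one_add_sub_one_mem (I := v.ltIdeal 1) hS
  intro h0
  simp [h0] at hmem

section

open scoped Classical

namespace RatFunc

variable {K : Type*} [Field K]

theorem inftyValuation_le_one_iff {f : RatFunc K} : inftyValuation K f ≤ 1 ↔ f.intDegree ≤ 0 := by
  rcases eq_or_ne f 0 with rfl | hf
  · simp [intDegree_zero]
  · rw [inftyValuation_apply, inftyValuation_of_nonzero K hf, ← WithZero.exp_zero,
      WithZero.exp_le_exp]

theorem inftyValuation_lt_one_iff {f : RatFunc K} :
    inftyValuation K f < 1 ↔ f = 0 ∨ f.intDegree < 0 := by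
  rcases eq_or_ne f 0 with rfl | hf
  · simp
  · rw [inftyValuation_apply, inftyValuation_of_nonzero K hf, ← WithZero.exp_zero,
      WithZero.exp_lt_exp]
    simp [hf]

theorem denom_neg_dvd (f : RatFunc K) : (-f).denom ∣ f.denom :=
  (denom_dvd f.denom_ne_zero).mpr ⟨-f.num, by rw [map_neg, neg_div, num_div_denom]⟩

end RatFunc

open RatFunc

def PolesIn (Ω : Set ℂ) (f : F) : Prop :=
  ∀ z : ℂ, (f.denom.map (algebraMap ℝ ℂ)).IsRoot z → z ∈ Ω

theorem PolesIn.of_denom_dvd {Ω : Set ℂ} {f g h : F} (hf : PolesIn Ω f) (hg : PolesIn Ω g)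
    (hd : h.denom ∣ f.denom * g.denom) : PolesIn Ω h := by
  intro z hz
  have hfg := hz.dvd (Polynomial.map_dvd (algebraMap ℝ ℂ) hd)
  rw [Polynomial.map_mul, Polynomial.IsRoot, Polynomial.eval_mul, mul_eq_zero] at hfg
  exact hfg.elim (hf z) (hg z)

theorem polesIn_of_denom_eq_one {Ω : Set ℂ} {f : F} (hf : f.denom = 1) : PolesIn Ω f := by
  simp [PolesIn, hf]

def polesInSubring (Ω : Set ℂ) : Subring F where
  carrier := {f | PolesIn Ω f}
  zero_mem' := polesIn_of_denom_eq_one denom_zero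
  one_mem' := polesIn_of_denom_eq_one denom_one
  add_mem' hf hg := hf.of_denom_dvd hg (denom_add_dvd _ _)
  mul_mem' hf hg := hf.of_denom_dvd hg (denom_mul_dvd _ _)
  neg_mem' hf := hf.of_denom_dvd hf (dvd_mul_of_dvd_left (denom_neg_dvd _) _)

def stableSubring (Ω : Set ℂ) : Subring F :=
  (inftyValuation ℝ).integer ⊓ polesInSubring Ω

theorem stableF_iff_mem {Ω : Set ℂ} {f : F} : StableF Ω f ↔ f ∈ stableSubring Ω := by
  rw [stableSubring, Subring.mem_inf, Valuation.mem_integer_iff, inftyValuation_le_one_iff]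
  rfl

theorem properM_iff {a b : Type} {A : Matrix a b F} :
    ProperM A ↔ ∀ i j, inftyValuation ℝ (A i j) ≤ 1 := by
  simp only [ProperM, inftyValuation_le_one_iff]

theorem strictlyProper_iff {a b : Type} {A : Matrix a b F} :
    StrictlyProper A ↔ ∀ i j, inftyValuation ℝ (A i j) < 1 := by
  simp only [StrictlyProper, inftyValuation_lt_one_iff]

theorem ProperM.mul_strictlyProper {a b c : Type} [Fintype b] {A : Matrix a b F}
    {B : Matrix b c F} (hA : ProperM A) (hB : StrictlyProper B) : StrictlyProper (A * B) :=
  strictlyProper_iff.mpr fun i j => Valuation.map_sum_lt _ one_ne_zero fun k _ => by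
    rw [map_mul]
    exact mul_lt_of_le_one_of_lt (properM_iff.mp hA i k) (strictlyProper_iff.mp hB k j)

namespace StrictlyProper

variable {a b c : Type} [Fintype b]

theorem mul_properM {A : Matrix a b F} {B : Matrix b c F} (hA : StrictlyProper A)
    (hB : ProperM B) : StrictlyProper (A * B) :=
  strictlyProper_iff.mpr fun i j => Valuation.map_sum_lt _ one_ne_zero fun k _ => by
    rw [map_mul]
    exact mul_lt_of_lt_of_le_one (strictlyProper_iff.mp hA i k) (properM_iff.mp hB k j)

theorem det_one_sub_ne_zero [DecidableEq b] {S : Matrix b b F} (hS : StrictlyProper S) :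
    (1 - S).det ≠ 0 := by
  rw [sub_eq_add_neg]
  exact (inftyValuation ℝ).det_one_add_ne_zero fun i j => by
    simpa using strictlyProper_iff.mp hS i j

end StrictlyProper

end

namespace MatStable

variable {Ω : Set ℂ} {a b c : Type}

theorem add {A B : Matrix a b F} (hA : MatStable Ω A) (hB : MatStable Ω B) :
    MatStable Ω (A + B) := fun i j =>
  stableF_iff_mem.mpr (add_mem (stableF_iff_mem.mp (hA i j)) (stableF_iff_mem.mp (hB i j)))

theorem sub {A B : Matrix a b F} (hA : MatStable Ω A) (hB : MatStable Ω B) :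
    MatStable Ω (A - B) := fun i j =>
  stableF_iff_mem.mpr (sub_mem (stableF_iff_mem.mp (hA i j)) (stableF_iff_mem.mp (hB i j)))

theorem mul [Fintype b] {A : Matrix a b F} {B : Matrix b c F} (hA : MatStable Ω A)
    (hB : MatStable Ω B) : MatStable Ω (A * B) := fun i j =>
  stableF_iff_mem.mpr <| sum_mem fun k _ =>
    mul_mem (stableF_iff_mem.mp (hA i k)) (stableF_iff_mem.mp (hB k j))

theorem one [DecidableEq a] : MatStable Ω (1 : Matrix a a F) := fun i j => by
  rw [stableF_iff_mem, Matrix.one_apply]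
  split_ifs
  exacts [one_mem _, zero_mem _]

theorem properM {A : Matrix a b F} (hA : MatStable Ω A) : ProperM A := fun i j => (hA i j).1

end MatStable

theorem Matrix.mul_inv_one_add_mul_mul {R : Type*} {m n : Type} [CommRing R] [Fintype m]
    [DecidableEq m] [Fintype n] [DecidableEq n] (K : Matrix n m R) (G : Matrix m n R)
    (h : IsUnit (1 + G * K).det) : K * (1 + G * K)⁻¹ * G = 1 - (1 + K * G)⁻¹ := by
  have h' : IsUnit (1 + K * G).det := by rwa [det_one_add_mul_comm]
  have hcomm : (1 + K * G) * K = K * (1 + G * K) := by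
    simp only [Matrix.add_mul, Matrix.mul_add, Matrix.one_mul, Matrix.mul_one, Matrix.mul_assoc]
  have hpush : K * (1 + G * K)⁻¹ = (1 + K * G)⁻¹ * K := calc
    K * (1 + G * K)⁻¹ = (1 + K * G)⁻¹ * ((1 + K * G) * K) * (1 + G * K)⁻¹ := by
      rw [nonsing_inv_mul_cancel_left _ _ h']
    _ = (1 + K * G)⁻¹ * K := by
      rw [hcomm, ← Matrix.mul_assoc, mul_nonsing_inv_cancel_right _ _ h]
  have hinv := nonsing_inv_mul _ h'
  rw [Matrix.mul_add, Matrix.mul_one] at hinv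
  rw [hpush, Matrix.mul_assoc, eq_sub_iff_add_eq, add_comm, hinv]

theorem Stabilizes.matStable_mul_inv_mul {Ω : Set ℂ} {m p : ℕ} {G : Matrix (Fin m) (Fin p) F}
    {K : Matrix (Fin p) (Fin m) F} (hK : Stabilizes Ω G K) :
    MatStable Ω (K * (1 + G * K)⁻¹ * G) := by
  rw [Matrix.mul_inv_one_add_mul_mul K G hK.1]
  exact MatStable.one.sub hK.2.2.2.2

namespace IsDCF

variable {Ω : Set ℂ} {m p : ℕ} {G : Matrix (Fin m) (Fin p) F}
  {M : Matrix (Fin p) (Fin p) F} {N : Matrix (Fin m) (Fin p) F}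
  {Mt : Matrix (Fin m) (Fin m) F} {Nt : Matrix (Fin m) (Fin p) F}
  {X : Matrix (Fin p) (Fin m) F} {Y : Matrix (Fin p) (Fin p) F}
  {Xt : Matrix (Fin p) (Fin m) F} {Yt : Matrix (Fin m) (Fin m) F}

theorem bezout_blocks (h : IsDCF Ω G M N Mt Nt X Y Xt Yt) :
    Y * M + X * N = 1 ∧ Y * Xt = X * Yt ∧ Mt * N = Nt * M ∧ Nt * Xt + Mt * Yt = 1 := by
  have := h.bezout
  rw [fromBlocks_multiply, ← fromBlocks_one, fromBlocks_inj] at this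
  obtain ⟨h1, h2, h3, h4⟩ := this
  simp only [Matrix.mul_neg, Matrix.neg_mul, neg_neg] at h2 h3 h4
  exact ⟨h1, neg_add_eq_zero.mp h2, (neg_add_eq_zero.mp h3).symm, h4⟩

theorem G_mul_M (h : IsDCF Ω G M N Mt Nt X Y Xt Yt) : G * M = N := by
  rw [h.hRight, Matrix.nonsing_inv_mul_cancel_right _ _ h.hM]

theorem Mt_mul_G (h : IsDCF Ω G M N Mt Nt X Y Xt Yt) : Mt * G = Nt := by
  rw [h.hLeft, Matrix.mul_nonsing_inv_cancel_left _ _ h.hMt]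

theorem youla (h : IsDCF Ω G M N Mt Nt X Y Xt Yt) {Q : Matrix (Fin p) (Fin m) F}
    (hQ : MatStable Ω Q) :
    IsDCF Ω G M N Mt Nt (X + Q * Mt) (Y - Q * Nt) (Xt + M * Q) (Yt - N * Q) where
  stM := h.stM
  stN := h.stN
  stMt := h.stMt
  stNt := h.stNt
  stX := h.stX.add (hQ.mul h.stMt)
  stY := h.stY.sub (hQ.mul h.stNt)
  stXt := h.stXt.add (h.stM.mul hQ)
  stYt := h.stYt.sub (h.stN.mul hQ)
  hM := h.hM
  hMt := h.hMt
  hLeft := h.hLeft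
  hRight := h.hRight
  bezout := by
    have hL : fromBlocks (Y - Q * Nt) (X + Q * Mt) (-Nt) Mt =
        fromBlocks 1 Q 0 1 * fromBlocks Y X (-Nt) Mt := by
      simp [fromBlocks_multiply, sub_eq_add_neg]
    have hR : fromBlocks M (-(Xt + M * Q)) N (Yt - N * Q) =
        fromBlocks M (-Xt) N Yt * fromBlocks 1 (-Q) 0 1 := by
      simp [fromBlocks_multiply, sub_eq_add_neg, add_comm]
    rw [hL, hR, Matrix.mul_assoc, ← Matrix.mul_assoc (fromBlocks Y X _ _), h.bezout,
      Matrix.one_mul, fromBlocks_multiply]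
    simp

theorem isUnit_det_Y (h : IsDCF Ω G M N Mt Nt X Y Xt Yt) (hG : StrictlyProper G) :
    IsUnit Y.det := by
  have hYM : Y * M = 1 - X * (G * M) := by
    rw [h.G_mul_M, eq_sub_iff_add_eq, h.bezout_blocks.1]
  have hS : StrictlyProper (X * (G * M)) :=
    h.stX.properM.mul_strictlyProper (hG.mul_properM h.stM.properM)
  have hdet := hS.det_one_sub_ne_zero
  rw [← hYM, det_mul] at hdet
  exact isUnit_iff_ne_zero.mpr (left_ne_zero_of_mul hdet)

theorem isUnit_det_Yt (h : IsDCF Ω G M N Mt Nt X Y Xt Yt) (hG : StrictlyProper G) :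
    IsUnit Yt.det := by
  have hMtYt : Mt * Yt = 1 - Mt * G * Xt := by
    rw [h.Mt_mul_G, eq_sub_iff_add_eq, add_comm, h.bezout_blocks.2.2.2]
  have hS : StrictlyProper (Mt * G * Xt) :=
    (h.stMt.properM.mul_strictlyProper hG).mul_properM h.stXt.properM
  have hdet := hS.det_one_sub_ne_zero
  rw [← hMtYt, det_mul] at hdet
  exact isUnit_iff_ne_zero.mpr (right_ne_zero_of_mul hdet)

theorem inv_mul_eq_mul_inv (h : IsDCF Ω G M N Mt Nt X Y Xt Yt) (hY : IsUnit Y.det)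
    (hYt : IsUnit Yt.det) : Y⁻¹ * X = Xt * Yt⁻¹ := calc
  Y⁻¹ * X = Y⁻¹ * (X * Yt) * Yt⁻¹ := by
    rw [Matrix.mul_assoc, mul_nonsing_inv_cancel_right _ _ hYt]
  _ = Xt * Yt⁻¹ := by rw [← h.bezout_blocks.2.1, nonsing_inv_mul_cancel_left _ _ hY]

theorem stabilizes (h : IsDCF Ω G M N Mt Nt X Y Xt Yt) (hY : IsUnit Y.det)
    (hYt : IsUnit Yt.det) : Stabilizes Ω G (Y⁻¹ * X) := by
  obtain ⟨hYMXN, -, -, hNtXtMtYt⟩ := h.bezout_blocks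
  have hK := h.inv_mul_eq_mul_inv hY hYt
  have hGK : Yt * Mt * (1 + G * (Y⁻¹ * X)) = 1 := by
    have : Mt * (1 + G * (Y⁻¹ * X)) * Yt = 1 := by
      simp only [hK, Matrix.mul_add, Matrix.add_mul, Matrix.mul_one, Matrix.mul_assoc,
        nonsing_inv_mul _ hYt]
      rw [← Matrix.mul_assoc Mt G, h.Mt_mul_G, add_comm, hNtXtMtYt]
    rw [Matrix.mul_assoc]
    exact mul_eq_one_comm.mp this
  have hKG : (1 + Y⁻¹ * X * G) * (M * Y) = 1 := by
    have : Y * ((1 + Y⁻¹ * X * G) * M) = 1 := by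
      simp only [Matrix.add_mul, Matrix.mul_add, Matrix.one_mul, Matrix.mul_assoc,
        mul_nonsing_inv_cancel_left _ _ hY, h.G_mul_M, hYMXN]
    rw [← Matrix.mul_assoc]
    exact mul_eq_one_comm.mp this
  refine ⟨isUnit_det_of_left_inverse hGK, ?_, ?_, ?_, ?_⟩
  · rw [inv_eq_left_inv hGK]
    exact h.stYt.mul h.stMt
  · rw [inv_eq_left_inv hGK, Matrix.mul_assoc, h.Mt_mul_G]
    exact h.stYt.mul h.stNt
  · rw [inv_eq_left_inv hGK, hK, Matrix.mul_assoc, nonsing_inv_mul_cancel_left _ _ hYt]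
    exact h.stXt.mul h.stMt
  · rw [inv_eq_right_inv hKG]
    exact h.stM.mul h.stY

theorem exists_youla_of_stabilizes (h : IsDCF Ω G M N Mt Nt X Y Xt Yt)
    {K : Matrix (Fin p) (Fin m) F} (hK : Stabilizes Ω G K) :
    ∃ Q : Matrix (Fin p) (Fin m) F, MatStable Ω Q ∧ (Y - Q * Nt) * K = X + Q * Mt := by
  have hKSG := hK.matStable_mul_inv_mul
  obtain ⟨hu, hS, hSG, hKS, -⟩ := hK
  set S := (1 + G * K)⁻¹
  set Q := (Y * K - X) * S * (Yt + G * Xt) with hQ_def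
  refine ⟨Q, ?_, ?_⟩
  · have hexp : Q =
        Y * (K * S) * Yt - X * S * Yt + (Y * (K * S * G) * Xt - X * (S * G) * Xt) := by
      simp only [hQ_def, Matrix.sub_mul, Matrix.mul_add, Matrix.mul_assoc]
    rw [hexp]
    exact ((h.stY.mul hKS).mul h.stYt |>.sub ((h.stX.mul hS).mul h.stYt)).add
      ((h.stY.mul hKSG).mul h.stXt |>.sub ((h.stX.mul hSG).mul h.stXt))
  · have hMt_inv : (Yt + G * Xt) * Mt = 1 := mul_eq_one_comm.mp <| by
      rw [Matrix.mul_add, ← Matrix.mul_assoc, h.Mt_mul_G, add_comm, h.bezout_blocks.2.2.2]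
    have hfac : Mt + Nt * K = Mt * (1 + G * K) := by
      rw [Matrix.mul_add, Matrix.mul_one, ← Matrix.mul_assoc, h.Mt_mul_G]
    have hQ : Q * Mt + Q * (Nt * K) = Y * K - X := calc
      _ = (Y * K - X) * S * ((Yt + G * Xt) * Mt) * (1 + G * K) := by
        rw [← Matrix.mul_add, hfac]
        simp only [hQ_def, Matrix.mul_assoc]
      _ = Y * K - X := by rw [hMt_inv, Matrix.mul_one, nonsing_inv_mul_cancel_right _ _ hu]
    rw [Matrix.sub_mul, Matrix.mul_assoc, eq_add_of_sub_eq hQ.symm]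
    abel

end IsDCF

/-- **Youla's parametrization (Theorem 1).** Given a DCF of the strictly proper plant `G`:
(i) for every stable `Q`, `Y_Q` and `Ỹ_Q` are invertible, `Y_Q⁻¹ X_Q = X̃_Q Ỹ_Q⁻¹`, and the
controller `K_Q = Y_Q⁻¹ X_Q` stabilizes `G`; (ii) every stabilizing controller is of this form. -/
theorem youla_parametrization (Ω : Set ℂ) (m p : ℕ)
    (G : Matrix (Fin m) (Fin p) F) (hG : StrictlyProper G)
    (M : Matrix (Fin p) (Fin p) F) (N : Matrix (Fin m) (Fin p) F)
    (Mt : Matrix (Fin m) (Fin m) F) (Nt : Matrix (Fin m) (Fin p) F)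
    (X : Matrix (Fin p) (Fin m) F) (Y : Matrix (Fin p) (Fin p) F)
    (Xt : Matrix (Fin p) (Fin m) F) (Yt : Matrix (Fin m) (Fin m) F)
    (hDCF : IsDCF Ω G M N Mt Nt X Y Xt Yt) :
    (∀ Q : Matrix (Fin p) (Fin m) F, MatStable Ω Q →
      IsUnit (Y - Q * Nt).det ∧ IsUnit (Yt - N * Q).det ∧
      (Y - Q * Nt)⁻¹ * (X + Q * Mt) = (Xt + M * Q) * (Yt - N * Q)⁻¹ ∧
      Stabilizes Ω G ((Y - Q * Nt)⁻¹ * (X + Q * Mt))) ∧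
    (∀ K : Matrix (Fin p) (Fin m) F, Stabilizes Ω G K →
      ∃ Q : Matrix (Fin p) (Fin m) F, MatStable Ω Q ∧
        K = (Y - Q * Nt)⁻¹ * (X + Q * Mt)) := by
  refine ⟨fun Q hQ => ?_, fun K hK => ?_⟩
  · have hDCF_Q := hDCF.youla hQ
    have hY := hDCF_Q.isUnit_det_Y hG
    have hYt := hDCF_Q.isUnit_det_Yt hG
    exact ⟨hY, hYt, hDCF_Q.inv_mul_eq_mul_inv hY hYt, hDCF_Q.stabilizes hY hYt⟩
  · obtain ⟨Q, hQ, hYK⟩ := hDCF.exists_youla_of_stabilizes hK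
    refine ⟨Q, hQ, ?_⟩
    rw [← hYK, nonsing_inv_mul_cancel_left _ _ ((hDCF.youla hQ).isUnit_det_Y hG)]
end
end

section
/- (Algebraic test for quadratic invariance.) Let G ∈ F^{m×p} and let K^bin : Fin p → Fin m → Bool define the sparsity subspace S. Then S is quadratically invariant under G (i.e. K·G·K ∈ S for every K ∈ S) if and only if for all i ∈ Fin p, j ∈ Fin m, k ∈ Fin p, l ∈ Fin m, the conditions K^bin i j = true, G j k ≠ 0 and K^bin k l = true imply K^bin i l = true (this is the Boolean condition K^bin·wp(G)·K^bin ≤ K^bin, where wp(G) j k = true iff G j k ≠ 0). -/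
open Matrix

noncomputable section

/-- **Algebraic test for quadratic invariance.** `S` is QI under `G` iff
`K^bin·wp(G)·K^bin ≤ K^bin` in the Boolean algebra, i.e. whenever `Kbin i j`, `G j k ≠ 0`
and `Kbin k l` hold, so does `Kbin i l`. -/
theorem quadratic_invariance_algebraic_test (m p : ℕ)
    (G : Matrix (Fin m) (Fin p) F)
    (Kbin : Fin p → Fin m → Bool) :
    (∀ K : Matrix (Fin p) (Fin m) F,
        (∀ i j, Kbin i j = false → K i j = 0) →
        (∀ i j, Kbin i j = false → (K * G * K) i j = 0)) ↔
    (∀ (i : Fin p) (j : Fin m) (k : Fin p) (l : Fin m),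
        Kbin i j = true → G j k ≠ 0 → Kbin k l = true → Kbin i l = true) := by
  constructor
  · intro hQI i j k l hij hGjk hkl
    by_contra hil
    rw [Bool.not_eq_true] at hil
    have hlj : l ≠ j := fun h => by rw [h] at hil; simp [hij] at hil
    have hki : k ≠ i := fun h => by rw [h] at hkl; rw [hil] at hkl; exact absurd hkl (by simp)
    set K : Matrix (Fin p) (Fin m) F :=
      fun a b => if a = i ∧ b = j then 1 else if a = k ∧ b = l then 1 else 0 with hKdef
    have hmem : ∀ a b, Kbin a b = false → K a b = 0 := by
      intro a b hab
      simp only [hKdef]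
      split_ifs with h1 h2
      · rw [h1.1, h1.2, hij] at hab; exact absurd hab (by simp)
      · rw [h2.1, h2.2, hkl] at hab; exact absurd hab (by simp)
      · rfl
    have := hQI K hmem i l hil
    rw [Matrix.mul_apply] at this
    rw [Finset.sum_eq_single k] at this
    · rw [Matrix.mul_apply, Finset.sum_eq_single j] at this
      · simp only [hKdef] at this
        simp [hki, hlj] at this
        exact hGjk this
      · intro b _ hbj
        have : K i b = 0 := by
          simp only [hKdef]
          simp [hbj, Ne.symm hki]
        rw [this, zero_mul]
      · intro h; exact absurd (Finset.mem_univ j) h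
    · intro b _ hbk
      have : K b l = 0 := by
        simp only [hKdef]
        simp [hbk, hlj]
      rw [this, mul_zero]
    · intro h; exact absurd (Finset.mem_univ k) h
  · intro h K hK i l hil
    rw [Matrix.mul_apply]
    apply Finset.sum_eq_zero
    intro k _
    rcases Bool.eq_false_or_eq_true (Kbin k l) with hkl | hkl
    swap
    · rw [hK k l hkl, mul_zero]
    · rw [Matrix.mul_apply]
      rw [show (∑ j, K i j * G j k) = 0 from ?_, zero_mul]
      apply Finset.sum_eq_zero
      intro j _
      rcases Bool.eq_false_or_eq_true (Kbin i j) with hij | hij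
      swap
      · rw [hK i j hij, zero_mul]
      · by_cases hG : G j k = 0
        · rw [hG, mul_zero]
        · exact absurd (h i j k l hij hG hkl) (by simp [hil])
end
end
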